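/- Let q > 3 be a prime power and n ≥ 2. Then the normalizer of SL_n(𝔽_q[t]) in SL_n(𝔽_q((t⁻¹))) is SL_n(𝔽_q[t]) itself: N_{SL_n(𝔽_q((t⁻¹)))}(SL_n(𝔽_q[t])) = SL_n(𝔽_q[t]). -/

import Mathlib

noncomputable section
open Matrix

variable (Fq : Type) [Field Fq] [Fintype Fq] (n : ℕ)

/-- `F = 𝔽_q((t⁻¹))`, realized as the field of formal Laurent series over `𝔽_q`
with uniformizer `X = t⁻¹`. -/
abbrev F := LaurentSeries Fq

/-- The ring embedding `𝔽_q[t] → F` sending `t` to `X⁻¹`. -/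
def polyEmb : Polynomial Fq →+* F Fq :=
  Polynomial.eval₂RingHom (HahnSeries.C : Fq →+* F Fq)
    ((HahnSeries.ofPowerSeries ℤ Fq PowerSeries.X)⁻¹)

/-- `SL_n(𝔽_q[t])`, the image of `SL_n` of the polynomial ring in `SL_n(F)`. -/
def SLpoly : Subgroup (SpecialLinearGroup (Fin n) (F Fq)) :=
  (SpecialLinearGroup.map (n := Fin n) (polyEmb Fq)).range

/-!
Let `g` normalize `SL_n(R)`, `R = 𝔽_q[t]`, and write `V = g`, `W = g⁻¹`. Conjugating the
transvections `1 + E_{lm}` by `g` shows `V i l * W m j ∈ R` for `l ≠ m`; conjugating the diagonal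
matrices with entries `u⁻¹, u` in positions `l, m` shows `V i l * W l j - u • V i m * W m j ∈ R`
for every `u ≠ 0, 1`, and two such `u` (this is where `q > 3` enters) give `V i l * W l j ∈ R`.
Since `R` is a PID, all products `V i l * W m j` lying in `R` force `V = f • P` and `f • W = Q`
with `P, Q` over `R` and `f ∈ F`. Then `P * Q = 1`, so `det P ∈ R^× = 𝔽_q^×` and `f ^ n` is a
nonzero constant. This makes `f` a constant `c₀`: normalized to `f / c₀ ≡ 1 mod X`, it satisfies
`(f / c₀) ^ m = 1` for the prime-to-`p` part `m` of `n` (Frobenius is injective), and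
`∑_{i<m} (f / c₀) ^ i` is a unit, so `f / c₀ = 1`. Hence `g = c₀ • P` has entries in `R`.
-/

theorem Submodule.mem_of_sub_smul_mem_of_sub_smul_mem {k M : Type*} [Field k] [AddCommGroup M]
    [Module k M] (S : Submodule k M) {x y : M} {u v : k} (huv : u ≠ v) (hu : x - u • y ∈ S)
    (hv : x - v • y ∈ S) : x ∈ S := by
  have hy : y ∈ S := by
    refine (S.smul_mem_iff (sub_ne_zero.mpr huv.symm)).mp ?_
    convert S.sub_mem hu hv using 1
    rw [sub_smul]
    abel
  simpa using S.add_mem hu (S.smul_mem u hy)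

theorem exists_pair_ne_zero_one {k : Type*} [Zero k] [One k] [Fintype k]
    (hk : 3 < Fintype.card k) : ∃ u v : k, u ≠ v ∧ u ≠ 0 ∧ u ≠ 1 ∧ v ≠ 0 ∧ v ≠ 1 := by
  classical
  have hcard : 1 < ({0, 1}ᶜ : Finset k).card := by
    have := Finset.card_le_two (a := (0 : k)) (b := 1)
    rw [Finset.card_compl]
    omega
  obtain ⟨u, hu, v, hv, huv⟩ := Finset.one_lt_card.mp hcard
  simp only [Finset.mem_compl, Finset.mem_insert, Finset.mem_singleton, not_or] at hu hv
  exact ⟨u, v, huv, hu.1, hu.2, hv.1, hv.2⟩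

theorem Matrix.mul_single_mul_apply {ι R : Type*} [Fintype ι] [DecidableEq ι] [Semiring R]
    (V W : Matrix ι ι R) (l m : ι) (c : R) (i j : ι) :
    (V * single l m c * W) i j = V i l * c * W m j := by
  simp [Matrix.mul_apply, Matrix.single_apply, ite_and]

theorem Matrix.diagonal_sub_one_eq_single_add_single {ι R : Type*} [DecidableEq ι] [Ring R]
    {l m : ι} (hlm : l ≠ m) {d : ι → R} (hd : ∀ j, j ≠ l → j ≠ m → d j = 1) :
    diagonal d - 1 = single l l (d l - 1) + single m m (d m - 1) := by
  rw [← diagonal_one, diagonal_sub, ← diagonal_single, ← diagonal_single, diagonal_add]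
  congr 1
  funext j
  rcases eq_or_ne j l with rfl | hjl
  · simp [hlm]
  rcases eq_or_ne j m with rfl | hjm
  · simp [hjl]
  · simp [hjl, hjm, hd j hjl hjm]

theorem Matrix.SpecialLinearGroup.mem_range_map_of_coe_eq_map {R S ι : Type*} [CommRing R]
    [CommRing S] [Fintype ι] [DecidableEq ι] {φ : R →+* S} (hφ : Function.Injective φ)
    {g : Matrix.SpecialLinearGroup ι S} {M : Matrix ι ι R} (h : (g : Matrix ι ι S) = M.map φ) :
    g ∈ (Matrix.SpecialLinearGroup.map φ).range :=
  ⟨⟨M, hφ (by rw [RingHom.map_det, RingHom.mapMatrix_apply, ← h, g.prop, map_one])⟩,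
    Subtype.ext h.symm⟩

theorem Matrix.exists_smul_map_of_mul_apply_mem_range {R K ι : Type*} [CommRing R]
    [IsPrincipalIdealRing R] [Field K] [Fintype ι] (φ : R →+* K) {V W : Matrix ι ι K}
    (hW : W ≠ 0) (h : ∀ i l m j, V i l * W m j ∈ Set.range φ) :
    ∃ (f : K) (P Q : Matrix ι ι R), V = f • P.map φ ∧ f • W = Q.map φ := by
  obtain ⟨m₀, j₀, hw⟩ : ∃ m j, W m j ≠ 0 := by
    by_contra! h₀
    exact hW (Matrix.ext h₀)
  choose B hB using h
  let I : Ideal R := Ideal.span (Set.range fun p : ι × ι => B p.1 p.2 m₀ j₀)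
  set D := Submodule.IsPrincipal.generator I
  obtain ⟨c, hc⟩ : ∃ c : ι × ι → R, ∑ p, c p • B p.1 p.2 m₀ j₀ = D :=
    (Submodule.mem_span_range_iff_exists_fun R).mp (Submodule.IsPrincipal.generator_mem I)
  choose P hP using fun i l => ((Submodule.IsPrincipal.mem_iff_generator_dvd I).mp
    (Ideal.subset_span ⟨(i, l), rfl⟩) : D ∣ B i l m₀ j₀)
  -- `f` is a generator of the `R`-span of the entries of `V`
  set f := ∑ p : ι × ι, φ (c p) * V p.1 p.2
  have hf : f * W m₀ j₀ = φ D := by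
    rw [← hc, map_sum, Finset.sum_mul]
    refine Finset.sum_congr rfl fun p _ => ?_
    rw [smul_eq_mul, map_mul, hB, mul_assoc]
  refine ⟨f, Matrix.of P, Matrix.of fun m j => ∑ p : ι × ι, c p * B p.1 p.2 m j, ?_, ?_⟩
  · ext i l
    apply mul_right_cancel₀ hw
    rw [smul_apply, map_apply, of_apply, smul_eq_mul, ← hB, hP, map_mul, ← hf]
    ring
  · ext m j
    simp [f, Finset.sum_mul, hB, mul_assoc]

section Normalizer

variable {k A K ι : Type*} [Field k] [CommRing A] [Algebra k A] [CommRing K] [Algebra k K]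
  [Fintype ι] [DecidableEq ι] {φ : A →ₐ[k] K}

theorem conj_apply_mem_range_of_mem_normalizer {g : Matrix.SpecialLinearGroup ι K}
    (hg : g ∈ Subgroup.normalizer (Matrix.SpecialLinearGroup.map (n := ι) (φ : A →+* K)).range)
    (T : Matrix.SpecialLinearGroup ι A) (i j : ι) :
    ((g : Matrix ι ι K) * (T : Matrix ι ι A).map φ * (g⁻¹ : Matrix.SpecialLinearGroup ι K)) i j
      ∈ φ.range := by
  obtain ⟨T', hT'⟩ := (Subgroup.mem_normalizer_iff.mp hg _).mp ⟨T, rfl⟩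
  refine φ.mem_range.mpr ⟨(T' : Matrix ι ι A) i j, ?_⟩
  have h := congrArg (fun M : Matrix.SpecialLinearGroup ι K => (M : Matrix ι ι K) i j) hT'
  simpa only [Matrix.SpecialLinearGroup.coe_mul, Matrix.SpecialLinearGroup.map_apply_coe,
    RingHom.mapMatrix_apply, Matrix.map_apply, AlgHom.coe_toRingHom] using h

variable {V W : Matrix ι ι K} (hVW : V * W = 1)
  (hconj : ∀ (T : Matrix.SpecialLinearGroup ι A) (i j : ι),
    (V * (T : Matrix ι ι A).map φ * W) i j ∈ φ.range)
include hVW hconj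

theorem conj_sub_one_apply_mem_range (T : Matrix.SpecialLinearGroup ι A) (i j : ι) :
    (V * ((T : Matrix ι ι A).map φ - 1) * W) i j ∈ φ.range := by
  rw [mul_sub, sub_mul, mul_one, hVW, Matrix.sub_apply]
  refine φ.range.sub_mem (hconj T i j) ?_
  rw [Matrix.one_apply]
  split_ifs
  exacts [φ.range.one_mem, φ.range.zero_mem]

theorem mul_apply_mem_range_of_ne {l m : ι} (hlm : l ≠ m) (i j : ι) :
    V i l * W m j ∈ φ.range := by
  have h := conj_sub_one_apply_mem_range hVW hconj
    (Matrix.SpecialLinearGroup.transvection hlm 1) i j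
  rwa [Matrix.SpecialLinearGroup.transvection_coe, Matrix.map_add _ (map_add φ),
    Matrix.map_one _ (map_zero φ) (map_one φ), add_sub_cancel_left, Matrix.map_single,
    Matrix.mul_single_mul_apply, map_one, mul_one] at h

theorem sub_smul_mul_apply_mem_range {l m : ι} (hlm : l ≠ m) {u : k} (hu₀ : u ≠ 0)
    (hu₁ : u ≠ 1) (i j : ι) : V i l * W l j - u • (V i m * W m j) ∈ φ.range := by
  set d : ι → k := Pi.mulSingle l u⁻¹ * Pi.mulSingle m u
  have hd : ∏ j, d j = 1 := by simp [d, Finset.prod_mul_distrib, hu₀]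
  let T : Matrix.SpecialLinearGroup ι A :=
    ⟨diagonal (fun j => algebraMap k A (d j)), by rw [det_diagonal, ← map_prod, hd, map_one]⟩
  have hT : (T : Matrix ι ι A).map φ = diagonal (fun j => algebraMap k K (d j)) := by
    rw [diagonal_map (map_zero φ)]
    simp only [AlgHom.commutes]
  have h := conj_sub_one_apply_mem_range hVW hconj T i j
  rw [hT, Matrix.diagonal_sub_one_eq_single_add_single hlm (fun a hal ham => by simp [d, hal, ham]),
    mul_add, add_mul, Matrix.add_apply, Matrix.mul_single_mul_apply,
    Matrix.mul_single_mul_apply] at h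
  have hsmul : ∀ (a b : ι) (c : k),
      V i a * (algebraMap k K c - 1) * W b j = (c - 1) • (V i a * W b j) :=
    fun a b c => by rw [Algebra.smul_def, map_sub, map_one]; ring
  simp only [hsmul, d, Pi.mul_apply, Pi.mulSingle_eq_same, Pi.mulSingle_eq_of_ne hlm,
    Pi.mulSingle_eq_of_ne hlm.symm, mul_one, one_mul] at h
  -- `(u⁻¹ - 1) • x + (u - 1) • y = (u⁻¹ - 1) • (x - u • y)`
  have hu : u⁻¹ - 1 ≠ 0 := sub_ne_zero.mpr (inv_ne_one.mpr hu₁)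
  have hcoeff : (u⁻¹ - 1)⁻¹ * (u - 1) = -u := by
    field_simp
    ring
  convert φ.range.smul_mem h (u⁻¹ - 1)⁻¹ using 1
  rw [smul_add, smul_smul, smul_smul, inv_mul_cancel₀ hu, one_smul, hcoeff, neg_smul,
    sub_eq_add_neg]

theorem mul_apply_mem_range [Fintype k] (hk : 3 < Fintype.card k) [Nontrivial ι]
    (i l m j : ι) : V i l * W m j ∈ φ.range := by
  rcases ne_or_eq l m with hlm | rfl
  · exact mul_apply_mem_range_of_ne hVW hconj hlm i j
  obtain ⟨m, hlm⟩ := exists_ne l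
  obtain ⟨u, v, huv, hu₀, hu₁, hv₀, hv₁⟩ := exists_pair_ne_zero_one hk
  exact (Subalgebra.toSubmodule φ.range).mem_of_sub_smul_mem_of_sub_smul_mem huv
    (sub_smul_mul_apply_mem_range hVW hconj hlm.symm hu₀ hu₁ i j)
    (sub_smul_mul_apply_mem_range hVW hconj hlm.symm hv₀ hv₁ i j)

end Normalizer

open PowerSeries in
theorem PowerSeries.eq_one_of_pow_eq_one {R : Type*} [CommRing R] [IsDomain R] (p : ℕ)
    [hp : Fact p.Prime] [CharP R p] {x : R⟦X⟧} (hx : constantCoeff x = 1) {N : ℕ} (hN : N ≠ 0)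
    (hxN : x ^ N = 1) : x = 1 := by
  have : CharP R⟦X⟧ p := charP_of_injective_ringHom C_injective p
  obtain ⟨r, m, hpm, rfl⟩ := Nat.exists_eq_pow_mul_and_not_dvd hN p hp.out.ne_one
  have hxm : x ^ m = 1 := by
    have h := sub_pow_char_pow (x ^ m) 1 r (p := p)
    rw [← pow_mul, mul_comm, hxN, one_pow, sub_self] at h
    exact sub_eq_zero.mp (pow_eq_zero_iff (pow_ne_zero r hp.out.ne_zero) |>.mp h)
  -- `∑ i < m, x ^ i` has constant coefficient `m ≠ 0`
  have hsum : ∑ i ∈ Finset.range m, x ^ i ≠ 0 := fun h =>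
    hpm (by simpa [hx, CharP.cast_eq_zero_iff R p] using congrArg constantCoeff h)
  have hgeom := geom_sum_mul x m
  rw [hxm, sub_self] at hgeom
  exact sub_eq_zero.mp ((mul_eq_zero.mp hgeom).resolve_left hsum)

open HahnSeries in
theorem LaurentSeries.exists_eq_C_of_pow_eq_C {K : Type*} [Field K] (p : ℕ) [Fact p.Prime]
    [CharP K p] {f : LaurentSeries K} {N : ℕ} (hN : N ≠ 0) {c : K} (hc : c ≠ 0)
    (hf : f ^ N = C c) : ∃ c₀ : K, f = C c₀ := by
  have horder : f.order = 0 := by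
    have h := order_pow f N
    rw [hf, order_C, eq_comm, smul_eq_zero] at h
    exact h.resolve_left (by exact_mod_cast hN)
  set φ := f.powerSeriesPart
  have hφ : ofPowerSeries ℤ K φ = f := by
    rw [LaurentSeries.ofPowerSeries_powerSeriesPart, horder, neg_zero, single_zero_one, one_mul]
  have hφN : φ ^ N = PowerSeries.C c :=
    ofPowerSeries_injective (Γ := ℤ) (by rw [_root_.map_pow, hφ, hf, ofPowerSeries_C])
  set c₀ := PowerSeries.constantCoeff φ
  have hc₀N : c₀ ^ N = c := by simpa using congrArg PowerSeries.constantCoeff hφN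
  have hc₀ : c₀ ≠ 0 := by
    rintro h
    rw [h, zero_pow hN] at hc₀N
    exact hc hc₀N.symm
  have h1 : PowerSeries.C c₀⁻¹ * φ = 1 := by
    refine PowerSeries.eq_one_of_pow_eq_one p (by simp [c₀, hc₀]) hN ?_
    rw [mul_pow, hφN, ← map_pow, ← map_mul, inv_pow, hc₀N, inv_mul_cancel₀ hc, map_one]
  refine ⟨c₀, ?_⟩
  rw [← hφ, ← ofPowerSeries_C, ← mul_one (PowerSeries.C c₀), ← h1, ← mul_assoc, ← map_mul,
    mul_inv_cancel₀ hc₀, map_one, one_mul]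

section PolyEmb

variable {k : Type} [Field k]

def polyAlgEmb : Polynomial k →ₐ[k] F k :=
  { polyEmb k with
    commutes' a := by simp [polyEmb, HahnSeries.algebraMap_apply', HahnSeries.ofPowerSeries_C] }

theorem polyEmb_C (a : k) : polyEmb k (Polynomial.C a) = HahnSeries.C a :=
  Polynomial.eval₂_C _ _

theorem polyEmb_monomial (m : ℕ) (a : k) :
    polyEmb k (Polynomial.monomial m a) = HahnSeries.single (-(m : ℤ)) a := by
  simp [polyEmb, HahnSeries.ofPowerSeries_X, HahnSeries.inv_single, HahnSeries.single_pow]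

theorem polyEmb_coeff_neg (p : Polynomial k) (m : ℕ) :
    (polyEmb k p).coeff (-m) = p.coeff m := by
  induction p using Polynomial.induction_on' with
  | add p q hp hq => rw [map_add, HahnSeries.coeff_add, hp, hq, Polynomial.coeff_add]
  | monomial m' a =>
    rw [polyEmb_monomial, Polynomial.coeff_monomial, HahnSeries.coeff_single]
    simp [eq_comm]

theorem polyEmb_injective : Function.Injective (polyEmb k) := fun p q h =>
  Polynomial.ext fun m => by rw [← polyEmb_coeff_neg, h, polyEmb_coeff_neg]

theorem mem_SLpoly_of_coe_eq_smul_map (p : ℕ) [Fact p.Prime] [CharP k p] {n : ℕ} (hn : n ≠ 0)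
    {g : SpecialLinearGroup (Fin n) (F k)} {f : F k} {P Q : Matrix (Fin n) (Fin n) (Polynomial k)}
    (hP : (g : Matrix (Fin n) (Fin n) (F k)) = f • P.map (polyEmb k))
    (hQ : f • ((g⁻¹ : SpecialLinearGroup (Fin n) (F k)) : Matrix (Fin n) (Fin n) (F k)) =
      Q.map (polyEmb k)) :
    g ∈ SLpoly k n := by
  have hPQ : P * Q = 1 := by
    refine Matrix.map_injective polyEmb_injective ?_
    dsimp only
    rw [Matrix.map_mul, Matrix.map_one _ (map_zero _) (map_one _), ← hQ, mul_smul_comm,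
      ← smul_mul_assoc, ← hP, ← Matrix.SpecialLinearGroup.coe_mul, mul_inv_cancel,
      Matrix.SpecialLinearGroup.coe_one]
  obtain ⟨c, hc, hcP⟩ := Polynomial.isUnit_iff.mp
    (IsUnit.of_mul_eq_one (a := P.det) Q.det (by rw [← det_mul, hPQ, det_one]))
  have hdet : f ^ n * HahnSeries.C c = 1 := by
    have h := g.prop
    rwa [hP, det_smul, Fintype.card_fin, ← RingHom.mapMatrix_apply, ← RingHom.map_det, ← hcP,
      polyEmb_C] at h
  have hfn : f ^ n = HahnSeries.C c⁻¹ := by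
    rw [map_inv₀]
    exact eq_inv_of_mul_eq_one_left hdet
  obtain ⟨c₀, hc₀⟩ := LaurentSeries.exists_eq_C_of_pow_eq_C p hn (inv_ne_zero hc.ne_zero) hfn
  refine Matrix.SpecialLinearGroup.mem_range_map_of_coe_eq_map polyEmb_injective
    (M := Polynomial.C c₀ • P) ?_
  ext i j
  simp [hP, hc₀, polyEmb_C]

end PolyEmb

theorem normalizer_SL_poly_eq_self
    (q : ℕ) (hq3 : 3 < q)
    (hcard : Fintype.card Fq = q) (hn : 2 ≤ n) :
    Subgroup.normalizer (SLpoly Fq n : Set (SpecialLinearGroup (Fin n) (F Fq))) = SLpoly Fq n := by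
  refine le_antisymm (fun g hg => ?_) Subgroup.le_normalizer
  have : Nontrivial (Fin n) := Fin.nontrivial_iff_two_le.mpr hn
  obtain ⟨p, _⟩ := CharP.exists Fq
  have : Fact p.Prime := ⟨CharP.char_is_prime Fq p⟩
  have hVW : (g : Matrix (Fin n) (Fin n) (F Fq)) *
      (g⁻¹ : SpecialLinearGroup (Fin n) (F Fq)) = 1 := by
    rw [← Matrix.SpecialLinearGroup.coe_mul, mul_inv_cancel, Matrix.SpecialLinearGroup.coe_one]
  have hprod := mul_apply_mem_range (φ := polyAlgEmb) hVW
    (conj_apply_mem_range_of_mem_normalizer hg) (hcard ▸ hq3)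
  obtain ⟨f, P, Q, hP, hQ⟩ := Matrix.exists_smul_map_of_mul_apply_mem_range (polyEmb Fq)
    (fun h => by simp [h] at hVW) hprod
  exact mem_SLpoly_of_coe_eq_smul_map p (by omega) hP hQ
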